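/- The image under Patience Sorting of the set of permutations of {1,…,n} avoiding the classical pattern 3-1-2 is exactly the set of non-crossing pile configurations, i.e., those pile configurations in which every pile is an interval of consecutive integers (so that for the composition (γ_1,…,γ_k) of n the piles are {1,…,γ_1}, {γ_1+1,…,γ_1+γ_2}, …, {n−γ_k+1,…,n}); in particular there are exactly 2^{n−1} such pile configurations. -/

import Mathlib

/-!
Patience sorting only puts a card on top of a larger one, so a pile read from the bottom is a
decreasing subsequence of the word: if `a < c` share a pile, a later value `b` with `a < b < c`
completes a 3-1-2. By induction on the word, for a 3-1-2-avoiding permutation every pile thus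
contains each value lying between two of its cards, i.e. every pile is an interval. Conversely,
interval piles with increasing tops concatenate to `1, …, n`, hence form
`{1, …, γ₁}, {γ₁ + 1, …, γ₁ + γ₂}, …` for a composition `γ` of `n`, and this configuration is
produced by the 3-1-2-avoiding permutation listing each block in decreasing order. Both sets are
therefore the image of an injective map from the `2 ^ (n - 1)` compositions of `n`.
-/

/-- One step of Patience Sorting: place card `c` on the leftmost pile whose top
(head) is larger than `c`, or start a new pile on the right.  Piles are stored
top-first, so each pile is an increasing list whose head is the top (smallest) card. -/
def PSinsert (c : ℕ) : List (List ℕ) → List (List ℕ)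
  | [] => [[c]]
  | [] :: ps => [] :: PSinsert c ps
  | (x :: p) :: ps =>
      if c < x then (c :: x :: p) :: ps else (x :: p) :: PSinsert c ps

/-- The pile configuration `R(w)` produced by Patience Sorting applied to the word `w`. -/
def PSpiles (w : List ℕ) : List (List ℕ) :=
  w.foldl (fun ps c => PSinsert c ps) []

/-- The one-line word (with values `1,…,n`) of a permutation of `Fin n`. -/
def permWord {n : ℕ} (σ : Equiv.Perm (Fin n)) : List ℕ :=
  List.ofFn fun i => (σ i : ℕ) + 1

open List

theorem List.headI_mem {α : Type*} [Inhabited α] {l : List α} (h : l ≠ []) : l.headI ∈ l := by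
  obtain ⟨x, l, rfl⟩ := exists_cons_of_ne_nil h
  exact mem_cons_self

theorem List.Pairwise.headI_le {α : Type*} [Preorder α] [Inhabited α] {l : List α}
    (hl : l.Pairwise (· < ·)) {x : α} (hx : x ∈ l) : l.headI ≤ x := by
  rcases l with _ | ⟨y, l⟩
  · simp at hx
  · rcases mem_cons.1 hx with rfl | hx
    · exact le_rfl
    · exact ((pairwise_cons.1 hl).1 x hx).le

theorem List.cons_cons_cons_sublist_iff {α : Type*} {l : List α} {a b c : α} :
    [a, b, c] <+ l ↔ ∃ (i j k : ℕ) (_ : i < j) (_ : j < k) (_ : k < l.length),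
      l[i] = a ∧ l[j] = b ∧ l[k] = c := by
  constructor
  · intro h
    obtain ⟨is, his, hsorted⟩ := sublist_eq_map_getElem h
    match is, his, hsorted with
    | [i, j, k], his, hsorted =>
      simp only [map_cons, map_nil, cons.injEq, and_true] at his
      simp only [pairwise_cons, mem_cons, not_mem_nil, forall_eq_or_imp] at hsorted
      exact ⟨i, j, k, hsorted.1.1, hsorted.2.1.1, k.2, his.1.symm, his.2.1.symm, his.2.2.symm⟩
  · rintro ⟨i, j, k, hij, hjk, hk, rfl, rfl, rfl⟩
    simpa using map_getElem_sublist (is := [⟨i, by omega⟩, ⟨j, by omega⟩, ⟨k, hk⟩])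
      (by simpa using ⟨⟨hij, hij.trans hjk⟩, hjk⟩)

theorem Finset.eq_Icc_min'_max' {α : Type*} [LinearOrder α] [LocallyFiniteOrder α]
    {s : Finset α} (hs : s.Nonempty) (h : ∀ a ∈ s, ∀ c ∈ s, ∀ x, a ≤ x → x ≤ c → x ∈ s) :
    s = Finset.Icc (s.min' hs) (s.max' hs) := by
  ext x
  rw [Finset.mem_Icc]
  exact ⟨fun hx => ⟨s.min'_le x hx, s.le_max' x hx⟩,
    fun hx => h _ (s.min'_mem hs) _ (s.max'_mem hs) x hx.1 hx.2⟩

def Contains312 (w : List ℕ) : Prop := ∃ a b c : ℕ, a < b ∧ b < c ∧ [c, a, b] <+ w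

theorem Contains312.mono {v w : List ℕ} (h : v <+ w) : Contains312 v → Contains312 w := by
  rintro ⟨a, b, c, hab, hbc, hs⟩
  exact ⟨a, b, c, hab, hbc, hs.trans h⟩

theorem contains312_append_singleton {w : List ℕ} {a b c : ℕ} (hca : [c, a] <+ w)
    (hab : a < b) (hbc : b < c) : Contains312 (w ++ [b]) :=
  ⟨a, b, c, hab, hbc, by simpa using hca.append (Sublist.refl [b])⟩

theorem not_contains312_append {d l : List ℕ} (hd : d.Pairwise (· > ·))
    (hdl : ∀ x ∈ d, ∀ y ∈ l, x < y) (hl : ¬ Contains312 l) : ¬ Contains312 (d ++ l) := by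
  rintro ⟨a, b, c, hab, hbc, hs⟩
  obtain ⟨l₁, l₂, hsplit, h₁, h₂⟩ := sublist_append_iff.1 hs
  rcases l₁ with _ | ⟨x, _ | ⟨y, _ | ⟨z, _ | ⟨t, l₁⟩⟩⟩⟩ <;>
    simp only [nil_append, cons_append, cons.injEq] at hsplit
  · exact hl ⟨a, b, c, hab, hbc, hsplit ▸ h₂⟩
  · obtain ⟨rfl, rfl⟩ := hsplit
    exact absurd (hdl c (h₁.subset (by simp)) a (h₂.subset (by simp))) (by omega)
  · obtain ⟨rfl, rfl, rfl⟩ := hsplit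
    exact absurd (hdl c (h₁.subset (by simp)) b (h₂.subset (by simp))) (by omega)
  · obtain ⟨rfl, rfl, rfl, -⟩ := hsplit
    exact absurd ((pairwise_cons.1 (pairwise_cons.1 (hd.sublist h₁)).2).1 b (by simp)) (by omega)
  · simp at hsplit

theorem PSinsert_append {c : ℕ} {ps : List (List ℕ)} (h : ∀ p ∈ ps, p.headI ≤ c)
    (qs : List (List ℕ)) : PSinsert c (ps ++ qs) = ps ++ PSinsert c qs := by
  induction ps with
  | nil => rfl
  | cons p ps ih =>
    have ih := ih fun q hq => h q (mem_cons_of_mem _ hq)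
    rcases p with _ | ⟨x, p⟩
    · simp [PSinsert, ih]
    · have : ¬ c < x := by simpa using h (x :: p) mem_cons_self
      simp [PSinsert, this, ih]

theorem PSinsert_cases (c : ℕ) {ps : List (List ℕ)} (hne : ∀ p ∈ ps, p ≠ []) :
    (∃ ps₁ p ps₂, ps = ps₁ ++ p :: ps₂ ∧ PSinsert c ps = ps₁ ++ (c :: p) :: ps₂ ∧
      (∀ q ∈ ps₁, q.headI ≤ c) ∧ c < p.headI) ∨
    (PSinsert c ps = ps ++ [[c]] ∧ ∀ q ∈ ps, q.headI ≤ c) := by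
  induction ps with
  | nil => exact .inr ⟨rfl, by simp⟩
  | cons p ps ih =>
    obtain ⟨x, p, rfl⟩ := exists_cons_of_ne_nil (hne p mem_cons_self)
    by_cases hc : c < x
    · exact .inl ⟨[], x :: p, ps, rfl, by simp [PSinsert, hc], by simp, hc⟩
    · have hx : (x :: p).headI ≤ c := le_of_not_gt hc
      rcases ih fun q hq => hne q (mem_cons_of_mem _ hq) with
        ⟨ps₁, q, ps₂, rfl, hins, hle, hlt⟩ | ⟨hins, hle⟩
      · refine .inl ⟨(x :: p) :: ps₁, q, ps₂, rfl, ?_, ?_, hlt⟩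
        · simp [PSinsert, hc, hins]
        · exact forall_mem_cons.2 ⟨hx, hle⟩
      · exact .inr ⟨by simp [PSinsert, hc, hins], forall_mem_cons.2 ⟨hx, hle⟩⟩

theorem PSpiles_append_singleton (w : List ℕ) (b : ℕ) :
    PSpiles (w ++ [b]) = PSinsert b (PSpiles w) := by
  simp [PSpiles, foldl_append]

structure IsPileState (w : List ℕ) (ps : List (List ℕ)) : Prop where
  flatten_perm : ps.flatten ~ w
  ne_nil : ∀ p ∈ ps, p ≠ []
  sorted : ∀ p ∈ ps, p.Pairwise (· < ·)
  heads_sorted : (ps.map headI).Pairwise (· < ·)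
  reverse_sublist : ∀ p ∈ ps, p.reverse <+ w

def ConvexIn (w p : List ℕ) : Prop := ∀ a ∈ p, ∀ c ∈ p, ∀ x ∈ w, a ≤ x → x ≤ c → x ∈ p

namespace IsPileState

variable {w : List ℕ} {ps : List (List ℕ)}

theorem mem_iff (h : IsPileState w ps) {x : ℕ} : x ∈ w ↔ ∃ p ∈ ps, x ∈ p := by
  rw [← h.flatten_perm.mem_iff, mem_flatten]

theorem headI_lt_of_headI_le (h : IsPileState w ps) {b : ℕ} (hb : b ∉ w) {p : List ℕ}
    (hp : p ∈ ps) (hle : p.headI ≤ b) : p.headI < b :=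
  lt_of_le_of_ne hle fun heq => hb (h.mem_iff.2 ⟨p, hp, heq ▸ headI_mem (h.ne_nil p hp)⟩)

theorem place_on_pile {ps₁ ps₂ : List (List ℕ)} {p : List ℕ}
    (h : IsPileState w (ps₁ ++ p :: ps₂)) {b : ℕ} (hb : b ∉ w)
    (hle : ∀ q ∈ ps₁, q.headI ≤ b) (hlt : b < p.headI) :
    IsPileState (w ++ [b]) (ps₁ ++ (b :: p) :: ps₂) := by
  have hw : w <+ w ++ [b] := sublist_append_left w [b]
  have hp := h.sorted p (by simp)
  have hheads := h.heads_sorted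
  have hne := h.ne_nil
  have hsorted := h.sorted
  have hsub := h.reverse_sublist
  simp only [forall_mem_append, forall_mem_cons] at hne hsorted hsub
  refine ⟨?_, ?_, ?_, ?_, ?_⟩
  · have := (h.flatten_perm.cons b).trans (perm_append_singleton b w).symm
    simp only [flatten_append, flatten_cons] at this ⊢
    exact perm_middle.trans this
  · simp only [forall_mem_append, forall_mem_cons]
    exact ⟨hne.1, cons_ne_nil _ _, hne.2.2⟩
  · simp only [forall_mem_append, forall_mem_cons]
    exact ⟨hsorted.1, pairwise_cons.2 ⟨fun y hy => hlt.trans_le (hp.headI_le hy), hp⟩,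
      hsorted.2.2⟩
  · simp only [map_append, map_cons, pairwise_append, pairwise_cons, mem_cons, headI_cons]
      at hheads ⊢
    refine ⟨hheads.1, ⟨fun a ha => hlt.trans (hheads.2.1.1 a ha), hheads.2.1.2⟩, ?_⟩
    rintro a ha c (rfl | hc)
    · obtain ⟨q, hq, rfl⟩ := mem_map.1 ha
      exact h.headI_lt_of_headI_le hb (by simp [hq]) (hle q hq)
    · exact hheads.2.2 a ha c (.inr hc)
  · simp only [forall_mem_append, forall_mem_cons]
    exact ⟨fun q hq => (hsub.1 q hq).trans hw, by simpa using hsub.2.1.append (Sublist.refl [b]),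
      fun q hq => (hsub.2.2 q hq).trans hw⟩

theorem new_pile (h : IsPileState w ps) {b : ℕ} (hb : b ∉ w) (hle : ∀ q ∈ ps, q.headI ≤ b) :
    IsPileState (w ++ [b]) (ps ++ [[b]]) := by
  refine ⟨?_, ?_, ?_, ?_, ?_⟩
  · simpa using h.flatten_perm.append_right [b]
  · simp only [forall_mem_append, forall_mem_singleton]
    exact ⟨h.ne_nil, cons_ne_nil _ _⟩
  · simp only [forall_mem_append, forall_mem_singleton]
    exact ⟨h.sorted, pairwise_singleton _ _⟩
  · rw [map_append, pairwise_append]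
    refine ⟨h.heads_sorted, pairwise_singleton _ _, ?_⟩
    simp only [map_cons, map_nil, headI_cons, mem_map, mem_singleton]
    rintro _ ⟨q, hq, rfl⟩ _ rfl
    exact h.headI_lt_of_headI_le hb hq (hle q hq)
  · simp only [forall_mem_append, forall_mem_singleton]
    exact ⟨fun q hq => (h.reverse_sublist q hq).trans (sublist_append_left w [b]), by simp⟩

theorem insert (h : IsPileState w ps) {b : ℕ} (hb : b ∉ w) :
    IsPileState (w ++ [b]) (PSinsert b ps) := by
  rcases PSinsert_cases b h.ne_nil with ⟨ps₁, p, ps₂, rfl, hins, hle, hlt⟩ | ⟨hins, hle⟩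
  · exact hins ▸ h.place_on_pile hb hle hlt
  · exact hins ▸ h.new_pile hb hle

theorem pair_sublist (h : IsPileState w ps) {p : List ℕ} (hp : p ∈ ps) {a c : ℕ}
    (ha : a ∈ p) (hc : c ∈ p) (hac : a < c) : [c, a] <+ w := by
  have : [a, c] <+ p := sublist_of_subperm_of_pairwise
    (subperm_of_subset (by simp [hac.ne]) (by simp [ha, hc])) (by simp [hac]) (h.sorted p hp)
  simpa using this.reverse.trans (h.reverse_sublist p hp)

theorem convexIn_append_singleton (h : IsPileState w ps) {b : ℕ} (hb : b ∉ w)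
    (h312 : ¬ Contains312 (w ++ [b])) {p : List ℕ} (hp : p ∈ ps) (hconv : ConvexIn w p) :
    ConvexIn (w ++ [b]) p := by
  intro a ha c hc x hx hax hxc
  rcases mem_append.1 hx with hx | hx
  · exact hconv a ha c hc x hx hax hxc
  · obtain rfl := mem_singleton.1 hx
    have hab : a ≠ x := fun hab => hb (hab ▸ h.mem_iff.2 ⟨p, hp, ha⟩)
    have hcb : x ≠ c := fun hcb => hb (hcb ▸ h.mem_iff.2 ⟨p, hp, hc⟩)
    exact absurd (contains312_append_singleton (h.pair_sublist hp ha hc (by omega))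
      (lt_of_le_of_ne hax hab) (lt_of_le_of_ne hxc hcb)) h312

theorem convexIn_cons {ps₁ ps₂ : List (List ℕ)} {p : List ℕ}
    (h : IsPileState w (ps₁ ++ p :: ps₂)) {b : ℕ} (hb : b ∉ w)
    (h312 : ¬ Contains312 (w ++ [b])) (hle : ∀ q ∈ ps₁, q.headI ≤ b) (hlt : b < p.headI)
    (hconv : ConvexIn w p) : ConvexIn (w ++ [b]) (b :: p) := by
  have hp := h.sorted p (by simp)
  -- A letter `x` of `w` with `b < x < p.headI` lies in a pile `r` left of `p`, whose top is
  -- below `b`; then `x`, the top of `r`, `b` is a 3-1-2.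
  have hgap : ∀ x ∈ w, b < x → p.headI ≤ x := by
    intro x hxw hbx
    by_contra! hxp
    obtain ⟨r, hr, hxr⟩ := h.mem_iff.1 hxw
    have hrx := (h.sorted r hr).headI_le hxr
    rcases mem_append.1 hr with hr₁ | hr₂
    · have hrb := h.headI_lt_of_headI_le hb hr (hle r hr₁)
      exact h312 (contains312_append_singleton
        (h.pair_sublist hr (headI_mem (h.ne_nil r hr)) hxr (by omega)) hrb hbx)
    · have hheads := h.heads_sorted
      simp only [map_append, map_cons, pairwise_append, pairwise_cons, mem_map] at hheads
      rcases mem_cons.1 hr₂ with rfl | hr₂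
      · omega
      · have := hheads.2.1.1 _ ⟨r, hr₂, rfl⟩
        omega
  intro a ha c hc x hx hax hxc
  rcases mem_append.1 hx with hxw | hxb
  · have hba : b ≤ a := by
      rcases mem_cons.1 ha with rfl | hap
      · exact le_rfl
      · exact (hlt.trans_le (hp.headI_le hap)).le
    have hbx : b < x := lt_of_le_of_ne (hba.trans hax) fun e => hb (e ▸ hxw)
    rcases mem_cons.1 hc with rfl | hcp
    · omega
    · exact mem_cons_of_mem b
        (hconv _ (headI_mem (h.ne_nil p (by simp))) c hcp x hxw (hgap x hxw hbx) hxc)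
  · exact mem_singleton.1 hxb ▸ mem_cons_self

theorem convexIn_PSinsert (h : IsPileState w ps) {b : ℕ} (hb : b ∉ w)
    (h312 : ¬ Contains312 (w ++ [b])) (hconv : ∀ p ∈ ps, ConvexIn w p) :
    ∀ p ∈ PSinsert b ps, ConvexIn (w ++ [b]) p := by
  have hold : ∀ p ∈ ps, ConvexIn (w ++ [b]) p := fun p hp =>
    h.convexIn_append_singleton hb h312 hp (hconv p hp)
  rcases PSinsert_cases b h.ne_nil with ⟨ps₁, p, ps₂, rfl, hins, hle, hlt⟩ | ⟨hins, -⟩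
  · rw [hins]
    simp only [forall_mem_append, forall_mem_cons] at hold hconv ⊢
    exact ⟨hold.1, h.convexIn_cons hb h312 hle hlt hconv.2.1, hold.2.2⟩
  · rw [hins]
    simp only [forall_mem_append, forall_mem_singleton]
    refine ⟨hold, ?_⟩
    simp only [ConvexIn, mem_singleton]
    omega

theorem flatten_sorted (h : IsPileState w ps) (hw : w.Nodup) (hconv : ∀ p ∈ ps, ConvexIn w p) :
    ps.flatten.Pairwise (· < ·) := by
  have hdisj := (nodup_flatten.1 (h.flatten_perm.nodup_iff.2 hw)).2
  refine pairwise_flatten.2 ⟨h.sorted, (hdisj.and (pairwise_map.1 h.heads_sorted)).imp_of_mem ?_⟩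
  rintro p q hp hq ⟨hpq, hheads⟩ x hx y hy
  by_contra! hyx
  have hpy := (h.sorted q hq).headI_le hy
  exact hpq (hconv p hp _ (headI_mem (h.ne_nil p hp)) x hx y (h.mem_iff.2 ⟨q, hq, hy⟩)
    (by omega) hyx) hy

end IsPileState

theorem isPileState_PSpiles {w : List ℕ} (hw : w.Nodup) : IsPileState w (PSpiles w) := by
  induction w using reverseRecOn with
  | nil => constructor <;> simp [PSpiles]
  | append_singleton w b ih =>
    rw [← concat_eq_append, nodup_concat] at hw
    rw [PSpiles_append_singleton]
    exact (ih hw.2).insert hw.1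

theorem convexIn_PSpiles {w : List ℕ} (hw : w.Nodup) (h312 : ¬ Contains312 w) :
    ∀ p ∈ PSpiles w, ConvexIn w p := by
  induction w using reverseRecOn with
  | nil => simp [PSpiles]
  | append_singleton w b ih =>
    rw [← concat_eq_append, nodup_concat] at hw
    rw [PSpiles_append_singleton]
    exact (isPileState_PSpiles hw.2).convexIn_PSinsert hw.1 h312
      (ih hw.2 fun h => h312 (h.mono (sublist_append_left w [b])))

theorem flatten_map_reverse_perm (R : List (List ℕ)) : (R.map reverse).flatten ~ R.flatten := by
  induction R with
  | nil => rfl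
  | cons p R ih => exact (reverse_perm p).append ih

theorem foldl_PSinsert_reverse {ps : List (List ℕ)} {p : List ℕ} (hp : p.Pairwise (· < ·))
    (hne : p ≠ []) (hps : ∀ q ∈ ps, q.headI ≤ p.headI) :
    p.reverse.foldl (fun ps c => PSinsert c ps) ps = ps ++ [p] := by
  rw [foldl_reverse]
  induction p with
  | nil => exact absurd rfl hne
  | cons x p ih =>
    rw [headI_cons] at hps
    rw [foldr_cons]
    rcases eq_or_ne p [] with rfl | hp'
    · simpa [PSinsert] using PSinsert_append hps []
    · obtain ⟨hxp, hp⟩ := pairwise_cons.1 hp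
      have hx : x < p.headI := hxp _ (headI_mem hp')
      rw [ih hp hp' fun q hq => (hps q hq).trans hx.le, PSinsert_append hps]
      obtain ⟨y, p, rfl⟩ := exists_cons_of_ne_nil hp'
      simp_all [PSinsert]

theorem foldl_PSinsert_flatten_map_reverse {R : List (List ℕ)}
    (hR : R.flatten.Pairwise (· < ·)) (hne : ∀ p ∈ R, p ≠ []) {ps : List (List ℕ)}
    (hps : ∀ q ∈ ps, ∀ x ∈ R.flatten, q.headI ≤ x) :
    (R.map reverse).flatten.foldl (fun ps c => PSinsert c ps) ps = ps ++ R := by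
  induction R generalizing ps with
  | nil => simp
  | cons p R ih =>
    rw [flatten_cons, pairwise_append] at hR
    have hp : p ≠ [] := hne p mem_cons_self
    rw [map_cons, flatten_cons, foldl_append,
      foldl_PSinsert_reverse hR.1 hp fun q hq => hps q hq _ (by simp [headI_mem hp]),
      ih hR.2.1 (fun q hq => hne q (mem_cons_of_mem _ hq))]
    · simp
    · simp only [forall_mem_append, forall_mem_singleton]
      exact ⟨fun q hq x hx => hps q hq x (by simp_all), fun x hx =>
        (hR.2.2 _ (headI_mem hp) x hx).le⟩

theorem PSpiles_flatten_map_reverse {R : List (List ℕ)} (hR : R.flatten.Pairwise (· < ·))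
    (hne : ∀ p ∈ R, p ≠ []) : PSpiles (R.map reverse).flatten = R := by
  simpa [PSpiles] using foldl_PSinsert_flatten_map_reverse hR hne (ps := []) (by simp)

theorem not_contains312_flatten_map_reverse {R : List (List ℕ)}
    (hR : R.flatten.Pairwise (· < ·)) : ¬ Contains312 (R.map reverse).flatten := by
  induction R with
  | nil => rintro ⟨a, b, c, -, -, h⟩; simp at h
  | cons p R ih =>
    rw [flatten_cons, pairwise_append] at hR
    rw [map_cons, flatten_cons]
    refine not_contains312_append (by simpa [pairwise_reverse] using hR.1) ?_ (ih hR.2.1)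
    intro x hx y hy
    exact hR.2.2 x (mem_reverse.1 hx) y ((flatten_map_reverse_perm R).subset hy)

theorem permWord_perm_range' {n : ℕ} (σ : Equiv.Perm (Fin n)) : permWord σ ~ range' 1 n := by
  have h := σ.ofFn_comp_perm fun i => (i : ℕ) + 1
  have hr : ofFn (fun i : Fin n => (i : ℕ) + 1) = range' 1 n :=
    ext_getElem (by simp) fun i _ _ => by simp [Nat.add_comm]
  rwa [hr] at h

theorem nodup_permWord {n : ℕ} (σ : Equiv.Perm (Fin n)) : (permWord σ).Nodup :=
  (permWord_perm_range' σ).nodup_iff.2 nodup_range'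

theorem mem_permWord {n : ℕ} (σ : Equiv.Perm (Fin n)) {x : ℕ} :
    x ∈ permWord σ ↔ 1 ≤ x ∧ x < 1 + n := by
  simpa using (permWord_perm_range' σ).mem_iff

theorem exists_permWord_eq {n : ℕ} {l : List ℕ} (hl : l ~ range' 1 n) :
    ∃ σ : Equiv.Perm (Fin n), permWord σ = l := by
  have hlen : l.length = n := by simpa using hl.length_eq
  have hnd : l.Nodup := hl.nodup_iff.2 nodup_range'
  have hmem : ∀ (i : ℕ) (hi : i < l.length), 1 ≤ l[i] ∧ l[i] ≤ n := fun i hi => by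
    have := hl.subset (getElem_mem hi)
    simp only [mem_range'_1] at this
    omega
  let f : Fin n → Fin n := fun i => ⟨l[i.1]'(by omega) - 1, by have := hmem i (by omega); omega⟩
  have hf : Function.Injective f := fun i j hij => by
    have := hmem i (by omega)
    have := hmem j (by omega)
    have hij : l[i.1]'(by omega) = l[j.1]'(by omega) := by
      simp only [f, Fin.mk.injEq] at hij
      omega
    exact Fin.ext (by simpa using (hnd.getElem_inj_iff).1 hij)
  refine ⟨Equiv.ofBijective f hf.bijective_of_finite, ext_getElem (by simp [permWord, hlen]) ?_⟩
  intro i _ hi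
  have := hmem i hi
  simp only [permWord, Equiv.ofBijective_apply, List.getElem_ofFn, f]
  omega

theorem contains312_permWord_iff {n : ℕ} (σ : Equiv.Perm (Fin n)) :
    Contains312 (permWord σ) ↔ ∃ i j k : Fin n, i < j ∧ j < k ∧ σ j < σ k ∧ σ k < σ i := by
  simp only [Contains312, cons_cons_cons_sublist_iff, permWord, length_ofFn, List.getElem_ofFn]
  constructor
  · rintro ⟨a, b, c, hab, hbc, i, j, k, hij, hjk, hk, rfl, rfl, rfl⟩
    exact ⟨⟨i, by omega⟩, ⟨j, by omega⟩, ⟨k, hk⟩, hij, hjk, by simp only [Fin.lt_def]; omega,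
      by simp only [Fin.lt_def]; omega⟩
  · rintro ⟨i, j, k, hij, hjk, hjk', hki⟩
    rw [Fin.lt_def] at hjk' hki
    exact ⟨_, _, _, Nat.succ_lt_succ hjk', Nat.succ_lt_succ hki, i, j, k, hij, hjk, k.2,
      rfl, rfl, rfl⟩

theorem not_contains312_permWord_iff {n : ℕ} (σ : Equiv.Perm (Fin n)) :
    ¬ Contains312 (permWord σ) ↔ ∀ i j k : Fin n, i < j → j < k → ¬(σ j < σ k ∧ σ k < σ i) := by
  rw [contains312_permWord_iff]
  exact ⟨fun h i j k hij hjk hσ => h ⟨i, j, k, hij, hjk, hσ⟩,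
    fun h ⟨i, j, k, hij, hjk, hσ⟩ => h i j k hij hjk hσ⟩

theorem exists_toFinset_eq_Icc_of_not_contains312 {n : ℕ} {σ : Equiv.Perm (Fin n)}
    (h312 : ¬ Contains312 (permWord σ)) :
    ∀ p ∈ PSpiles (permWord σ), ∃ a b : ℕ, p.toFinset = Finset.Icc a b := by
  have hI := isPileState_PSpiles (nodup_permWord σ)
  intro p hp
  have hne : p.toFinset.Nonempty := by simpa using hI.ne_nil p hp
  refine ⟨_, _, Finset.eq_Icc_min'_max' hne fun a ha c hc x hax hxc => ?_⟩
  rw [mem_toFinset] at ha hc ⊢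
  have ha' := (mem_permWord σ).1 (hI.mem_iff.2 ⟨p, hp, ha⟩)
  have hc' := (mem_permWord σ).1 (hI.mem_iff.2 ⟨p, hp, hc⟩)
  exact convexIn_PSpiles (nodup_permWord σ) h312 p hp a ha c hc x
    ((mem_permWord σ).2 (by omega)) hax hxc

def compositionPiles {n : ℕ} (c : Composition n) : List (List ℕ) :=
  (range' 1 n).splitWrtComposition c

theorem flatten_compositionPiles {n : ℕ} (c : Composition n) :
    (compositionPiles c).flatten = range' 1 n :=
  flatten_splitWrtCompositionAux (by simp [c.blocks_sum])

theorem map_length_compositionPiles {n : ℕ} (c : Composition n) :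
    (compositionPiles c).map length = c.blocks :=
  map_length_splitWrtCompositionAux (by simp [c.blocks_sum])

theorem compositionPiles_injective {n : ℕ} : Function.Injective (compositionPiles (n := n)) :=
  fun c d h => Composition.ext <| by
    rw [← map_length_compositionPiles, h, map_length_compositionPiles]

theorem exists_not_contains312_PSpiles_eq {n : ℕ} (c : Composition n) :
    ∃ σ : Equiv.Perm (Fin n), ¬ Contains312 (permWord σ) ∧
      PSpiles (permWord σ) = compositionPiles c := by
  have hsorted : (compositionPiles c).flatten.Pairwise (· < ·) := by
    rw [flatten_compositionPiles]
    exact pairwise_lt_range'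
  have hne : ∀ p ∈ compositionPiles c, p ≠ [] := fun p hp => ne_nil_of_length_pos
    (c.blocks_pos (map_length_compositionPiles c ▸ mem_map_of_mem hp))
  obtain ⟨σ, hσ⟩ := exists_permWord_eq (n := n)
    ((flatten_map_reverse_perm (compositionPiles c)).trans (by rw [flatten_compositionPiles]))
  exact ⟨σ, hσ ▸ not_contains312_flatten_map_reverse hsorted,
    hσ ▸ PSpiles_flatten_map_reverse hsorted hne⟩

theorem exists_compositionPiles_eq {n : ℕ} {σ : Equiv.Perm (Fin n)}
    (hR : ∀ p ∈ PSpiles (permWord σ), ∃ a b : ℕ, p.toFinset = Finset.Icc a b) :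
    ∃ c : Composition n, compositionPiles c = PSpiles (permWord σ) := by
  have hI := isPileState_PSpiles (nodup_permWord σ)
  have hconv : ∀ p ∈ PSpiles (permWord σ), ConvexIn (permWord σ) p :=
    fun p hp a ha c hc x _ hax hxc => by
      obtain ⟨u, v, huv⟩ := hR p hp
      rw [← mem_toFinset, huv, Finset.mem_Icc] at ha hc ⊢
      omega
  have hflat : (PSpiles (permWord σ)).flatten = range' 1 n :=
    (hI.flatten_perm.trans (permWord_perm_range' σ)).eq_of_pairwise'
      (hI.flatten_sorted (nodup_permWord σ) hconv) pairwise_lt_range'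
  refine ⟨⟨(PSpiles (permWord σ)).map length, ?_, ?_⟩, eq_iff_flatten_eq.2 ⟨?_, ?_⟩⟩
  · intro _ hm
    obtain ⟨p, hp, rfl⟩ := mem_map.1 hm
    exact length_pos_of_ne_nil (hI.ne_nil p hp)
  · rw [← length_flatten, hflat, length_range']
  · rw [flatten_compositionPiles, hflat]
  · exact map_length_compositionPiles _

theorem setOf_not_contains312_eq_range (n : ℕ) :
    {R | ∃ σ : Equiv.Perm (Fin n), ¬ Contains312 (permWord σ) ∧ PSpiles (permWord σ) = R} =
      Set.range (compositionPiles (n := n)) := by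
  refine Set.Subset.antisymm ?_ ?_
  · rintro _ ⟨σ, h312, rfl⟩
    exact exists_compositionPiles_eq (exists_toFinset_eq_Icc_of_not_contains312 h312)
  · rintro _ ⟨c, rfl⟩
    exact exists_not_contains312_PSpiles_eq c

theorem setOf_nonCrossing_eq_range (n : ℕ) :
    {R | (∃ σ : Equiv.Perm (Fin n), PSpiles (permWord σ) = R) ∧
      ∀ p ∈ R, ∃ a b : ℕ, p.toFinset = Finset.Icc a b} = Set.range (compositionPiles (n := n)) := by
  refine Set.Subset.antisymm ?_ ?_
  · rintro _ ⟨⟨σ, rfl⟩, hR⟩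
    exact exists_compositionPiles_eq hR
  · rintro _ ⟨c, rfl⟩
    obtain ⟨σ, h312, hσ⟩ := exists_not_contains312_PSpiles_eq c
    exact ⟨⟨σ, hσ⟩, hσ ▸ exists_toFinset_eq_Icc_of_not_contains312 h312⟩

/-- The image under Patience Sorting of the permutations of `{1,…,n}`
avoiding the classical pattern 3-1-2 (no `i < j < k` with `σ(j) < σ(k) < σ(i)`) is
exactly the set of non-crossing pile configurations, i.e., pile configurations (sequences
of piles arising from some permutation) each of whose piles is an interval of consecutive
integers; in particular there are exactly `2 ^ (n - 1)` such pile configurations. -/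
theorem stmt18 (n : ℕ) :
    {R : List (List ℕ) | ∃ σ : Equiv.Perm (Fin n),
        (∀ i j k : Fin n, i < j → j < k → ¬(σ j < σ k ∧ σ k < σ i)) ∧
        PSpiles (permWord σ) = R}
      = {R | (∃ σ : Equiv.Perm (Fin n), PSpiles (permWord σ) = R) ∧
             ∀ p ∈ R, ∃ a b : ℕ, p.toFinset = Finset.Icc a b} ∧
    Nat.card {R : List (List ℕ) //
        (∃ σ : Equiv.Perm (Fin n), PSpiles (permWord σ) = R) ∧
        ∀ p ∈ R, ∃ a b : ℕ, p.toFinset = Finset.Icc a b} = 2 ^ (n - 1) := by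
  simp only [← not_contains312_permWord_iff]
  refine ⟨(setOf_not_contains312_eq_range n).trans (setOf_nonCrossing_eq_range n).symm, ?_⟩
  rw [← Set.coe_ofPred, setOf_nonCrossing_eq_range,
    Nat.card_range_of_injective compositionPiles_injective, Nat.card_eq_fintype_card,
    composition_card]
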